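/- For every CBPP instance and every nonnegative real AF_ca-feasible solution (x̄, z̄), there exists a nonnegative real AF_ml-feasible solution (x̄′, z̄) with the same objective value z̄. -/

import Mathlib

open scoped Classical

/-- An instance of the Colored Bin Packing Problem: bin capacity `L > 0`, `Q ≥ 2` colors,
items `Fin n` each with a length in `(0, L]`, a positive demand and a color in `{1, …, Q}`. -/
structure CBPP where
  L : ℕ
  Q : ℕ
  hL : 0 < L
  hQ : 2 ≤ Q
  n : ℕ
  len : Fin n → ℕ
  hlenPos : ∀ u, 0 < len u
  hlenLe : ∀ u, len u ≤ L
  dem : Fin n → ℕ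
  hdemPos : ∀ u, 0 < dem u
  col : Fin n → ℕ
  hcol : ∀ u, col u ∈ Finset.Icc 1 Q

namespace CBPP

variable (P : CBPP)

/-- Item arc `(i, j, q)` of the AF_ca graph: `0 ≤ i < j ≤ L`, color `q ∈ {1,…,Q}`, and there
is an item of length `j − i` and color `q`. -/
def IsItemArc (a : ℕ × ℕ × ℕ) : Prop :=
  a.1 < a.2.1 ∧ a.2.1 ≤ P.L ∧ a.2.2 ∈ Finset.Icc 1 P.Q ∧
    ∃ u : Fin P.n, P.len u = a.2.1 - a.1 ∧ P.col u = a.2.2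

/-- Loss arc `(i, L, Q+1)` of the AF_ca graph, for `1 ≤ i ≤ L − 1`. -/
def IsLossArc (a : ℕ × ℕ × ℕ) : Prop :=
  a.2.2 = P.Q + 1 ∧ a.2.1 = P.L ∧ 1 ≤ a.1 ∧ a.1 ≤ P.L - 1

def IsArc (a : ℕ × ℕ × ℕ) : Prop := P.IsItemArc a ∨ P.IsLossArc a

/-- The (finite) arc set `A` of the AF_ca graph. -/
noncomputable def arcs : Finset (ℕ × ℕ × ℕ) :=
  (Finset.range (P.L + 1) ×ˢ Finset.range (P.L + 1) ×ˢ Finset.range (P.Q + 2)).filter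
    (fun a => P.IsArc a)

/-- Total flow on arcs entering vertex `j`. -/
noncomputable def inflow (x : ℕ × ℕ × ℕ → ℝ) (j : ℕ) : ℝ :=
  ∑ a ∈ P.arcs.filter (fun a => a.2.1 = j), x a

/-- Total flow on arcs leaving vertex `j`. -/
noncomputable def outflow (x : ℕ × ℕ × ℕ → ℝ) (j : ℕ) : ℝ :=
  ∑ a ∈ P.arcs.filter (fun a => a.1 = j), x a

/-- Total flow on arcs of color `q` entering vertex `j`. -/
noncomputable def inflowC (x : ℕ × ℕ × ℕ → ℝ) (j q : ℕ) : ℝ :=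
  ∑ a ∈ P.arcs.filter (fun a => a.2.1 = j ∧ a.2.2 = q), x a

/-- Total flow on arcs of colors in `{1,…,Q+1} \ {q}` leaving vertex `j`. -/
noncomputable def outflowNotC (x : ℕ × ℕ × ℕ → ℝ) (j q : ℕ) : ℝ :=
  ∑ a ∈ P.arcs.filter (fun a => a.1 = j ∧ a.2.2 ≠ q), x a

/-- AF_ca-feasibility of a nonnegative real solution `(x, z)`. -/
structure AFcaFeasible (x : ℕ × ℕ × ℕ → ℝ) (z : ℝ) : Prop where
  nonneg : ∀ a ∈ P.arcs, 0 ≤ x a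
  znonneg : 0 ≤ z
  flow_source : P.inflow x 0 - P.outflow x 0 = -z
  flow_mid : ∀ j, 1 ≤ j → j ≤ P.L - 1 → P.inflow x j - P.outflow x j = 0
  flow_sink : P.inflow x P.L - P.outflow x P.L = z
  color_alt : ∀ j, 1 ≤ j → j ≤ P.L - 1 → ∀ q ∈ Finset.Icc 1 P.Q,
    P.inflowC x j q ≤ P.outflowNotC x j q
  demand : ∀ u : Fin P.n,
    (∑ a ∈ P.arcs.filter (fun a => a.2.1 = a.1 + P.len u ∧ a.2.2 = P.col u), x a) = P.dem u

end CBPP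

namespace CBPP

variable (P : CBPP)

/-- Source arc `((0,0),(j,q))` of the AF_ml graph: some item has length `j` and color `q`. -/
def IsMlSourceArc (a : (ℕ × ℕ) × ℕ × ℕ) : Prop :=
  a.1 = (0, 0) ∧ ∃ u : Fin P.n, P.len u = a.2.1 ∧ P.col u = a.2.2

/-- Item arc `((i,q'),(j,q))` of the AF_ml graph: `1 ≤ i < j ≤ L`, `q' ∈ {1,…,Q}`, `q ≠ q'`,
and some item has length `j − i` and color `q`. -/
def IsMlItemArc (a : (ℕ × ℕ) × ℕ × ℕ) : Prop :=
  1 ≤ a.1.1 ∧ a.1.1 < a.2.1 ∧ a.2.1 ≤ P.L ∧ a.1.2 ∈ Finset.Icc 1 P.Q ∧ a.2.2 ≠ a.1.2 ∧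
    ∃ u : Fin P.n, P.len u = a.2.1 - a.1.1 ∧ P.col u = a.2.2

/-- Loss arc `((i,q),(L,q))` of the AF_ml graph, for `1 ≤ i ≤ L − 1` and `q ∈ {1,…,Q}`. -/
def IsMlLossArc (a : (ℕ × ℕ) × ℕ × ℕ) : Prop :=
  1 ≤ a.1.1 ∧ a.1.1 ≤ P.L - 1 ∧ a.2.1 = P.L ∧ a.2.2 = a.1.2 ∧ a.1.2 ∈ Finset.Icc 1 P.Q

def IsMlArc (a : (ℕ × ℕ) × ℕ × ℕ) : Prop :=
  P.IsMlSourceArc a ∨ P.IsMlItemArc a ∨ P.IsMlLossArc a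

/-- The (finite) arc set of the AF_ml graph. -/
noncomputable def mlArcs : Finset ((ℕ × ℕ) × ℕ × ℕ) :=
  ((Finset.range (P.L + 1) ×ˢ Finset.range (P.Q + 1)) ×ˢ
    (Finset.range (P.L + 1) ×ˢ Finset.range (P.Q + 1))).filter (fun a => P.IsMlArc a)

/-- Total flow on AF_ml arcs entering vertex `v`. -/
noncomputable def mlIn (x : (ℕ × ℕ) × ℕ × ℕ → ℝ) (v : ℕ × ℕ) : ℝ :=
  ∑ a ∈ P.mlArcs.filter (fun a => a.2 = v), x a

/-- Total flow on AF_ml arcs leaving vertex `v`. -/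
noncomputable def mlOut (x : (ℕ × ℕ) × ℕ × ℕ → ℝ) (v : ℕ × ℕ) : ℝ :=
  ∑ a ∈ P.mlArcs.filter (fun a => a.1 = v), x a

/-- AF_ml-feasibility of a nonnegative real solution `(x, z)`. -/
structure AFmlFeasible (x : (ℕ × ℕ) × ℕ × ℕ → ℝ) (z : ℝ) : Prop where
  nonneg : ∀ a ∈ P.mlArcs, 0 ≤ x a
  znonneg : 0 ≤ z
  flow_source : P.mlOut x (0, 0) = z
  flow_mid : ∀ j q, 1 ≤ j → j ≤ P.L - 1 → q ∈ Finset.Icc 1 P.Q →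
    P.mlIn x (j, q) = P.mlOut x (j, q)
  flow_sink : (∑ a ∈ P.mlArcs.filter (fun a => a.2.1 = P.L), x a) = z
  demand : ∀ u : Fin P.n,
    (∑ a ∈ P.mlArcs.filter (fun a =>
      a.2.1 = a.1.1 + P.len u ∧ a.2.2 = P.col u ∧ a.1.2 ≠ P.col u), x a) = P.dem u

end CBPP

/-!
At an inner vertex `j` of the AF_ca graph, let `r p` be the flow entering `j` with colour
`p ∈ {1, …, Q}` and `c q` the flow leaving it with colour `q ∈ {1, …, Q + 1}`. Colour alternation
says `r p + c p ≤ ∑ c`, which is exactly what is needed to route the incoming flow to the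
outgoing flow without ever sending colour `p` on with colour `p`: a transportation plan `Y j`
with zero diagonal (built one row at a time, each row chosen so that the rest stays feasible).
The AF_ml flow then sends, from layer `(j, p)`, the share `Y j p q / c q` of the flow on every
AF_ca arc of colour `q` leaving `j`, and `Y j p (Q + 1)` along its loss arc. Every AF_ca arc carries
the total of its AF_ml copies, which gives the demand, source and sink constraints, and the flow
leaving `(j, p)` is the row sum `∑ q, Y j p q = r p`, the flow entering it.
-/

open Finset

theorem Finset.exists_sum_eq_of_le_of_le {ι : Type*} (s : Finset ι) {l u : ι → ℝ}
    (hlu : ∀ i ∈ s, l i ≤ u i) {a : ℝ} (hl : ∑ i ∈ s, l i ≤ a) (hu : a ≤ ∑ i ∈ s, u i) :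
    ∃ w : ι → ℝ, (∀ i ∈ s, l i ≤ w i ∧ w i ≤ u i) ∧ ∑ i ∈ s, w i = a := by
  set t := (a - ∑ i ∈ s, l i) / (∑ i ∈ s, u i - ∑ i ∈ s, l i)
  have ht0 : 0 ≤ t := div_nonneg (by linarith) (by linarith)
  have ht1 : t ≤ 1 := div_le_one_of_le₀ (by linarith) (by linarith)
  refine ⟨fun i => l i + t * (u i - l i), fun i hi => ?_, ?_⟩
  · have := hlu i hi
    constructor <;> nlinarith
  · rw [sum_add_distrib, ← mul_sum, sum_sub_distrib]
    rcases eq_or_lt_of_le (hl.trans hu) with h | h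
    · rw [← h]; linarith
    · simp only [t]; field_simp; ring

/-- The lower bounds that a row of weight `ρ` must respect to keep the remaining transportation
problem feasible have total at most `ρ`. -/
theorem Finset.sum_max_zero_le {ι : Type*} (s : Finset ι) {r c : ι → ℝ} {ρ T : ℝ}
    (hr : ∀ i ∈ s, 0 ≤ r i) (hc : ∀ i ∈ s, 0 ≤ c i) (hρ : 0 ≤ ρ)
    (hrT : ρ + ∑ i ∈ s, r i ≤ T) (hcT : ∑ i ∈ s, c i ≤ T) (hrc : ∀ i ∈ s, r i + c i ≤ T) :
    ∑ i ∈ s, max 0 (r i + c i + ρ - T) ≤ ρ := by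
  set S := s.filter (fun i => 0 < r i + c i + ρ - T)
  have hS : ∑ i ∈ s, max 0 (r i + c i + ρ - T) = ∑ i ∈ S, (r i + c i + ρ - T) := by
    rw [sum_filter]
    refine sum_congr rfl fun i _ => ?_
    split_ifs with h
    · exact max_eq_right h.le
    · exact max_eq_left (not_lt.1 h)
  have hSs : S ⊆ s := filter_subset _ _
  rw [hS]
  rcases Nat.lt_or_ge S.card 2 with hcard | hcard
  · interval_cases h : S.card
    · simp [card_eq_zero.1 h, hρ]
    · obtain ⟨j, hj⟩ := card_eq_one.1 h
      have := hrc j (hSs (by simp [hj]))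
      rw [hj, sum_singleton]
      linarith
  · have hrS : ∑ i ∈ S, r i ≤ ∑ i ∈ s, r i :=
      sum_le_sum_of_subset_of_nonneg hSs fun i hi _ => hr i hi
    have hcS : ∑ i ∈ S, c i ≤ ∑ i ∈ s, c i :=
      sum_le_sum_of_subset_of_nonneg hSs fun i hi _ => hc i hi
    have hsr : 0 ≤ ∑ i ∈ s, r i := sum_nonneg hr
    -- two or more terms each carry `ρ - T ≤ 0`, which pays for `∑ r ≤ T - ρ` and `∑ c ≤ T`
    have h2 : (2 : ℝ) ≤ S.card := by exact_mod_cast hcard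
    have hexp : ∑ i ∈ S, (r i + c i + ρ - T) = ∑ i ∈ S, r i + ∑ i ∈ S, c i + S.card * (ρ - T) := by
      simp only [add_sub_assoc, sum_add_distrib, sum_const, nsmul_eq_mul]
    rw [hexp]
    nlinarith

theorem Finset.exists_first_row_transport {ι : Type*} [DecidableEq ι] {s C : Finset ι} {k : ι}
    (hk : k ∉ s) (hRC : insert k s ⊆ C) {r c : ι → ℝ} (hr : ∀ i ∈ insert k s, 0 ≤ r i)
    (hc : ∀ j ∈ C, 0 ≤ c j) (hsum : ∑ i ∈ insert k s, r i = ∑ j ∈ C, c j)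
    (hrc : ∀ i ∈ insert k s, r i + c i ≤ ∑ j ∈ C, c j) :
    ∃ w : ι → ℝ, (∀ j, 0 ≤ w j) ∧ w k = 0 ∧ (∀ j ∈ C, w j ≤ c j) ∧ ∑ j ∈ C, w j = r k ∧
      ∀ i ∈ s, r i + (c i - w i) ≤ ∑ j ∈ C, c j - r k := by
  set T := ∑ j ∈ C, c j
  have hkC : k ∈ C := hRC (mem_insert_self k s)
  have hsC : s ⊆ C := (subset_insert k s).trans hRC
  have hrs : ∀ i ∈ s, 0 ≤ r i := fun i hi => hr i (mem_insert_of_mem hi)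
  have hsD : s ⊆ C.erase k := fun i hi => mem_erase.2 ⟨fun h => hk (h ▸ hi), hsC hi⟩
  set l : ι → ℝ := fun j => if j ∈ s then max 0 (r j + c j + r k - T) else 0
  have hl0 : ∀ j, 0 ≤ l j := fun j => by simp only [l]; split_ifs <;> simp
  have hlc : ∀ j ∈ C.erase k, l j ≤ c j := by
    intro j hj
    have hcj := hc j (mem_of_mem_erase hj)
    simp only [l]
    split_ifs with hjs
    · exact max_le hcj (by linarith [single_le_sum hrs hjs, sum_insert (f := r) hk])
    · exact hcj
  have hl : ∑ j ∈ C.erase k, l j ≤ r k := by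
    rw [sum_ite_mem, inter_eq_right.2 hsD]
    exact sum_max_zero_le s hrs (fun i hi => hc i (hsC hi)) (hr k (mem_insert_self k s))
      (by rw [← sum_insert hk, hsum]) (sum_le_sum_of_subset_of_nonneg hsC fun j hj _ => hc j hj)
      fun i hi => hrc i (mem_insert_of_mem hi)
  have hu : r k ≤ ∑ j ∈ C.erase k, c j := by
    rw [sum_erase_eq_sub hkC]
    linarith [hrc k (mem_insert_self k s)]
  obtain ⟨w, hw, hwsum⟩ := exists_sum_eq_of_le_of_le (C.erase k) hlc hl hu
  refine ⟨fun j => if j ∈ C.erase k then w j else 0, fun j => ?_, by simp, fun j hj => ?_, ?_,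
    fun i hi => ?_⟩
  · dsimp only
    split_ifs with hj
    exacts [(hl0 j).trans (hw j hj).1, le_rfl]
  · dsimp only
    split_ifs with hjk
    exacts [(hw j hjk).2, hc j hj]
  · rw [sum_ite_mem, inter_eq_right.2 (erase_subset k C), hwsum]
  · -- `l i` is the least value of `w i` for which this holds
    have := (hw i (hsD hi)).1
    simp only [l, if_pos hi, if_pos (hsD hi)] at this ⊢
    linarith [le_max_right 0 (r i + c i + r k - T)]

theorem Finset.exists_transport_diag_eq_zero {ι : Type*} [DecidableEq ι] {R C : Finset ι}
    (hRC : R ⊆ C) {r c : ι → ℝ} (hr : ∀ i ∈ R, 0 ≤ r i) (hc : ∀ j ∈ C, 0 ≤ c j)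
    (hsum : ∑ i ∈ R, r i = ∑ j ∈ C, c j) (hrc : ∀ k ∈ R, r k + c k ≤ ∑ j ∈ C, c j) :
    ∃ y : ι → ι → ℝ, (∀ i j, 0 ≤ y i j) ∧ (∀ i, y i i = 0) ∧
      (∀ i ∈ R, ∑ j ∈ C, y i j = r i) ∧ (∀ j ∈ C, ∑ i ∈ R, y i j = c j) := by
  induction R using Finset.induction_on generalizing c with
  | empty =>
    refine ⟨fun _ _ => 0, fun _ _ => le_rfl, fun _ => rfl, by simp, fun j hj => ?_⟩
    rw [sum_empty, eq_comm, sum_eq_zero_iff_of_nonneg hc] at hsum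
    simp [hsum j hj]
  | @insert k s hk ih =>
    obtain ⟨w, hw0, hwk, hwc, hwsum, hwrest⟩ := exists_first_row_transport hk hRC hr hc hsum hrc
    have hrest : ∑ j ∈ C, (c j - w j) = ∑ j ∈ C, c j - r k := by rw [sum_sub_distrib, hwsum]
    have hrs : ∀ i ∈ s, 0 ≤ r i := fun i hi => hr i (mem_insert_of_mem hi)
    obtain ⟨y, hy0, hydiag, hyrow, hycol⟩ := ih ((subset_insert k s).trans hRC) hrs
      (c := fun j => c j - w j) (fun j hj => sub_nonneg.2 (hwc j hj))
      (by rw [hrest, ← hsum, sum_insert hk]; ring) (fun i hi => hrest ▸ hwrest i hi)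
    have hne : ∀ i ∈ s, i ≠ k := fun i hi h => hk (h ▸ hi)
    refine ⟨fun i j => if i = k then w j else y i j, fun i j => ?_, fun i => ?_, ?_, ?_⟩
    · dsimp only
      split_ifs
      exacts [hw0 j, hy0 i j]
    · dsimp only
      split_ifs with hik
      exacts [hik ▸ hwk, hydiag i]
    · intro i hi
      rcases mem_insert.1 hi with rfl | his
      · simpa using hwsum
      · simpa [hne i his] using hyrow i his
    · intro j hj
      simp only [sum_insert hk, if_true, sum_congr rfl fun i hi => if_neg (hne i hi),
        hycol j hj]
      ring

namespace CBPP

variable (P : CBPP)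

lemma mem_arcs_mk {i j c : ℕ} : (i, j, c) ∈ P.arcs ↔
    (i < j ∧ j ≤ P.L ∧ c ∈ Icc 1 P.Q ∧ ∃ u, P.len u = j - i ∧ P.col u = c) ∨
      (c = P.Q + 1 ∧ j = P.L ∧ 1 ≤ i ∧ i ≤ P.L - 1) := by
  refine mem_filter.trans ⟨And.right, fun h => ⟨?_, h⟩⟩
  have := P.hL
  simp only [mem_product, mem_range]
  rcases h with ⟨h1, h2, h3, -⟩ | ⟨h1, h2, h3, h4⟩
  · have := (mem_Icc.1 h3).2
    omega
  · omega

lemma bounds_of_mem_arcs {a : ℕ × ℕ × ℕ} (ha : a ∈ P.arcs) :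
    a.1 < a.2.1 ∧ a.2.1 ≤ P.L ∧ a.2.2 ∈ Icc 1 (P.Q + 1) := by
  obtain ⟨i, j, c⟩ := a
  dsimp only
  have := P.hL
  rcases P.mem_arcs_mk.1 ha with ⟨h1, h2, h3, -⟩ | ⟨h1, h2, h3, h4⟩
  · have := mem_Icc.1 h3
    exact ⟨h1, h2, mem_Icc.2 ⟨this.1, by omega⟩⟩
  · exact ⟨by omega, h2.le, mem_Icc.2 ⟨by omega, h1.le⟩⟩

lemma mem_mlArcs_mk {i p j q : ℕ} : ((i, p), (j, q)) ∈ P.mlArcs ↔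
    (i = 0 ∧ p = 0 ∧ ∃ u, P.len u = j ∧ P.col u = q) ∨
      (1 ≤ i ∧ i < j ∧ j ≤ P.L ∧ p ∈ Icc 1 P.Q ∧ q ≠ p ∧ ∃ u, P.len u = j - i ∧ P.col u = q) ∨
      (1 ≤ i ∧ i ≤ P.L - 1 ∧ j = P.L ∧ q = p ∧ p ∈ Icc 1 P.Q) := by
  have hrange : P.IsMlArc ((i, p), (j, q)) →
      ((i, p), (j, q)) ∈
        (range (P.L + 1) ×ˢ range (P.Q + 1)) ×ˢ (range (P.L + 1) ×ˢ range (P.Q + 1)) := by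
    have := P.hL
    simp only [IsMlArc, IsMlSourceArc, IsMlItemArc, IsMlLossArc, Prod.mk.injEq, mem_product,
      mem_range]
    rintro (⟨⟨rfl, rfl⟩, u, rfl, rfl⟩ | ⟨h1, h2, h3, h4, -, u, -, rfl⟩ | ⟨h1, h2, h3, rfl, h5⟩)
    · have := P.hlenLe u
      have := (mem_Icc.1 (P.hcol u)).2
      omega
    · have := (mem_Icc.1 (P.hcol u)).2
      have := (mem_Icc.1 h4).2
      omega
    · have := (mem_Icc.1 h5).2
      omega
  rw [mlArcs, mem_filter, and_iff_right_of_imp hrange]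
  simp only [IsMlArc, IsMlSourceArc, IsMlItemArc, IsMlLossArc, Prod.mk.injEq, and_assoc]

/-- The second coordinates `p` of the AF_ml vertices `(i, p)`. -/
def layers (i : ℕ) : Finset ℕ := if i = 0 then {0} else Icc 1 P.Q

/-- An AF_ml arc lies over the AF_ca arc with the same endpoints; loss arcs, which stay in their
layer, lie over the AF_ca loss arcs of colour `Q + 1`. -/
def mlProj (b : (ℕ × ℕ) × ℕ × ℕ) : ℕ × ℕ × ℕ :=
  (b.1.1, b.2.1, if b.2.2 = b.1.2 then P.Q + 1 else b.2.2)

/-- The copy of the AF_ca arc `a` leaving layer `p`. -/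
def liftArc (p : ℕ) (a : ℕ × ℕ × ℕ) : (ℕ × ℕ) × ℕ × ℕ :=
  ((a.1, p), (a.2.1, if a.2.2 = P.Q + 1 then p else a.2.2))

lemma mlProj_liftArc {p : ℕ} {a : ℕ × ℕ × ℕ} (hp : p ≠ a.2.2) :
    P.mlProj (P.liftArc p a) = a := by
  obtain ⟨i, j, c⟩ := a
  simp only [mlProj, liftArc] at hp ⊢
  split_ifs <;> simp_all

lemma mlProj_mem {b : (ℕ × ℕ) × ℕ × ℕ} (hb : b ∈ P.mlArcs) : P.mlProj b ∈ P.arcs := by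
  obtain ⟨⟨i, p⟩, j, q⟩ := b
  rw [mlProj, mem_arcs_mk]
  rcases P.mem_mlArcs_mk.1 hb with ⟨rfl, rfl, u, rfl, rfl⟩ | ⟨h1, h2, h3, h4, h5, u, h6, rfl⟩ |
    ⟨h1, h2, rfl, rfl, h5⟩
  · have hc := mem_Icc.1 (P.hcol u)
    have hq : P.col u ≠ 0 := by omega
    exact Or.inl ⟨P.hlenPos u, P.hlenLe u, by simp [hq, P.hcol u], u, rfl, by simp [hq]⟩
  · exact Or.inl ⟨h2, h3, by simp [h5, P.hcol u], u, h6, by simp [h5]⟩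
  · exact Or.inr ⟨by simp, rfl, h1, h2⟩

lemma mem_layers_erase {b : (ℕ × ℕ) × ℕ × ℕ} (hb : b ∈ P.mlArcs) :
    b.1.2 ∈ (P.layers b.1.1).erase (P.mlProj b).2.2 := by
  obtain ⟨⟨i, p⟩, j, q⟩ := b
  simp only [layers, mlProj, mem_erase]
  rcases P.mem_mlArcs_mk.1 hb with ⟨rfl, rfl, u, rfl, rfl⟩ | ⟨h1, -, -, h4, h5, -⟩ |
    ⟨h1, -, -, rfl, h5⟩
  · have hc := mem_Icc.1 (P.hcol u)
    have hq : P.col u ≠ 0 := by omega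
    simp [hq, Ne.symm hq]
  · simp [h4, h5, Ne.symm h5, show i ≠ 0 by omega]
  · have := (mem_Icc.1 h5).2
    simp [h5, show i ≠ 0 by omega]
    omega

lemma liftArc_mlProj {b : (ℕ × ℕ) × ℕ × ℕ} (hb : b ∈ P.mlArcs) :
    P.liftArc b.1.2 (P.mlProj b) = b := by
  obtain ⟨⟨i, p⟩, j, q⟩ := b
  have hq : q ≤ P.Q := by
    rcases P.mem_mlArcs_mk.1 hb with ⟨-, -, u, -, rfl⟩ | ⟨-, -, -, -, -, u, -, rfl⟩ |
      ⟨-, -, -, rfl, h5⟩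
    · exact (mem_Icc.1 (P.hcol u)).2
    · exact (mem_Icc.1 (P.hcol u)).2
    · exact (mem_Icc.1 h5).2
  simp only [liftArc, mlProj]
  split_ifs <;> simp_all

lemma liftArc_mem {p : ℕ} {a : ℕ × ℕ × ℕ} (ha : a ∈ P.arcs)
    (hp : p ∈ (P.layers a.1).erase a.2.2) : P.liftArc p a ∈ P.mlArcs := by
  obtain ⟨i, j, c⟩ := a
  simp only [layers, mem_erase] at hp
  rw [liftArc, mem_mlArcs_mk]
  rcases P.mem_arcs_mk.1 ha with ⟨h1, h2, h3, u, h4, rfl⟩ | ⟨rfl, rfl, h3, h4⟩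
  · have hc := mem_Icc.1 (P.hcol u)
    have hc' : P.col u ≠ P.Q + 1 := by omega
    simp only [if_neg hc']
    by_cases hi : i = 0
    · subst hi
      simp only [if_true, mem_singleton] at hp
      exact Or.inl ⟨rfl, hp.2, u, by simpa using h4, rfl⟩
    · simp only [if_neg hi] at hp
      exact Or.inr (Or.inl ⟨by omega, h1, h2, hp.2, Ne.symm hp.1, u, h4, rfl⟩)
  · simp only [if_neg (show i ≠ 0 by omega)] at hp
    exact Or.inr (Or.inr ⟨h3, h4, rfl, by simp, hp.2⟩)

lemma sum_mlArcs {M : Type*} [AddCommMonoid M] (g : (ℕ × ℕ) × ℕ × ℕ → M) :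
    ∑ b ∈ P.mlArcs, g b = ∑ a ∈ P.arcs, ∑ p ∈ (P.layers a.1).erase a.2.2, g (P.liftArc p a) := by
  rw [sum_sigma' P.arcs (fun a => (P.layers a.1).erase a.2.2) (fun a p => g (P.liftArc p a))]
  refine sum_nbij' (fun b => ⟨P.mlProj b, b.1.2⟩) (fun x => P.liftArc x.2 x.1) ?_ ?_ ?_ ?_ ?_
  · intro b hb
    exact mem_sigma.2 ⟨P.mlProj_mem hb, P.mem_layers_erase hb⟩
  · intro x hx
    exact P.liftArc_mem (mem_sigma.1 hx).1 (mem_sigma.1 hx).2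
  · intro b hb
    exact P.liftArc_mlProj hb
  · rintro ⟨a, p⟩ hx
    simp only [Sigma.mk.injEq, heq_eq_eq]
    exact ⟨P.mlProj_liftArc (ne_of_mem_erase (mem_sigma.1 hx).2), rfl⟩
  · intro b hb
    rw [P.liftArc_mlProj hb]

lemma sum_filter_mlArcs {M : Type*} [AddCommMonoid M] (g : (ℕ × ℕ) × ℕ × ℕ → M)
    (pr : (ℕ × ℕ) × ℕ × ℕ → Prop) [DecidablePred pr] (pr' : ℕ × ℕ × ℕ → Prop) [DecidablePred pr']
    (h : ∀ a ∈ P.arcs, ∀ p ∈ (P.layers a.1).erase a.2.2, pr (P.liftArc p a) ↔ pr' a) :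
    ∑ b ∈ P.mlArcs.filter pr, g b =
      ∑ a ∈ P.arcs.filter pr', ∑ p ∈ (P.layers a.1).erase a.2.2, g (P.liftArc p a) := by
  rw [sum_filter, sum_filter, sum_mlArcs]
  refine sum_congr rfl fun a ha => ?_
  split_ifs with ha'
  · exact sum_congr rfl fun p hp => if_pos ((h a ha p hp).2 ha')
  · exact sum_eq_zero fun p hp => if_neg fun h' => ha' ((h a ha p hp).1 h')

lemma sum_filter_mlArcs_fst {M : Type*} [AddCommMonoid M] (g : (ℕ × ℕ) × ℕ × ℕ → M) {j q : ℕ}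
    (hj : j ≠ 0) (hq : q ∈ Icc 1 P.Q) :
    ∑ b ∈ P.mlArcs.filter (fun b => b.1 = (j, q)), g b =
      ∑ a ∈ P.arcs.filter (fun a => a.1 = j ∧ a.2.2 ≠ q), g (P.liftArc q a) := by
  rw [sum_filter, sum_filter, sum_mlArcs]
  refine sum_congr rfl fun a _ => ?_
  have hlift : ∀ p, (P.liftArc p a).1 = (j, q) ↔ a.1 = j ∧ p = q := fun p => by
    simp [liftArc]
  simp only [hlift]
  by_cases haj : a.1 = j
  · simp only [haj, true_and, layers, if_neg hj, sum_ite_eq', mem_erase, hq, and_true]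
    exact if_congr ne_comm rfl rfl
  · simp [haj]

noncomputable def outflowC (x : ℕ × ℕ × ℕ → ℝ) (j q : ℕ) : ℝ :=
  ∑ a ∈ P.arcs.filter (fun a => a.1 = j ∧ a.2.2 = q), x a

section Flow

variable {P} {x : ℕ × ℕ × ℕ → ℝ}

lemma inflow_zero : P.inflow x 0 = 0 := by
  refine sum_eq_zero fun a ha => ?_
  obtain ⟨ha, ha0⟩ := mem_filter.1 ha
  exact absurd (P.bounds_of_mem_arcs ha).1 (by omega)

lemma outflow_L : P.outflow x P.L = 0 := by
  refine sum_eq_zero fun a ha => ?_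
  obtain ⟨ha, haL⟩ := mem_filter.1 ha
  have := P.bounds_of_mem_arcs ha
  exact absurd this.1 (by omega)

lemma sum_inflowC {j : ℕ} (hj : j ≠ P.L) :
    ∑ q ∈ Icc 1 P.Q, P.inflowC x j q = P.inflow x j := by
  have hmaps : ∀ a ∈ P.arcs.filter (fun a => a.2.1 = j), a.2.2 ∈ Icc 1 P.Q := by
    intro a ha
    obtain ⟨ha', rfl⟩ := mem_filter.1 ha
    rcases P.mem_arcs_mk.1 ha' with h | h
    · exact h.2.2.1
    · exact absurd h.2.1 hj
  rw [inflow, ← sum_fiberwise_of_maps_to hmaps]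
  exact sum_congr rfl fun q _ => by rw [inflowC, filter_filter]

lemma sum_outflowC_mul (j : ℕ) (f : ℕ → ℝ) :
    ∑ a ∈ P.arcs.filter (fun a => a.1 = j), x a * f a.2.2 =
      ∑ q ∈ Icc 1 (P.Q + 1), P.outflowC x j q * f q := by
  have hmaps : ∀ a ∈ P.arcs.filter (fun a => a.1 = j), a.2.2 ∈ Icc 1 (P.Q + 1) :=
    fun a ha => (P.bounds_of_mem_arcs (mem_filter.1 ha).1).2.2
  rw [← sum_fiberwise_of_maps_to hmaps]
  refine sum_congr rfl fun q _ => ?_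
  rw [outflowC, sum_mul, filter_filter]
  exact sum_congr rfl fun a ha => by rw [(mem_filter.1 ha).2.2]

lemma outflowC_add_outflowNotC (j q : ℕ) :
    P.outflowC x j q + P.outflowNotC x j q = P.outflow x j := by
  rw [outflow, ← sum_filter_add_sum_filter_not _ (fun a => a.2.2 = q), outflowC, outflowNotC,
    filter_filter, filter_filter]

lemma sum_outflowC (j : ℕ) : ∑ q ∈ Icc 1 (P.Q + 1), P.outflowC x j q = P.outflow x j := by
  simpa [outflow] using (sum_outflowC_mul (x := x) j (fun _ => 1)).symm

lemma outflowC_nonneg (hx : ∀ a ∈ P.arcs, 0 ≤ x a) (j q : ℕ) : 0 ≤ P.outflowC x j q :=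
  sum_nonneg fun a ha => hx a (mem_filter.1 ha).1

lemma inflowC_nonneg (hx : ∀ a ∈ P.arcs, 0 ≤ x a) (j q : ℕ) : 0 ≤ P.inflowC x j q :=
  sum_nonneg fun a ha => hx a (mem_filter.1 ha).1

lemma le_outflowC (hx : ∀ a ∈ P.arcs, 0 ≤ x a) {a : ℕ × ℕ × ℕ} (ha : a ∈ P.arcs) :
    x a ≤ P.outflowC x a.1 a.2.2 :=
  single_le_sum (fun b hb => hx b (mem_filter.1 hb).1) (mem_filter.2 ⟨ha, rfl, rfl⟩)

variable (P x) in
/-- `y p q` is the part of the flow entering vertex `i` with colour `p` that leaves it with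
colour `q`, colour `Q + 1` standing for the loss arc. -/
structure IsTransportAt (i : ℕ) (y : ℕ → ℕ → ℝ) : Prop where
  nonneg : ∀ p q, 0 ≤ y p q
  diag : ∀ p, y p p = 0
  row : ∀ p ∈ Icc 1 P.Q, ∑ q ∈ Icc 1 (P.Q + 1), y p q = P.inflowC x i p
  col : ∀ q ∈ Icc 1 (P.Q + 1), ∑ p ∈ Icc 1 P.Q, y p q = P.outflowC x i q

variable (P x) in
def IsColorTransport (Y : ℕ → ℕ → ℕ → ℝ) : Prop :=
  ∀ i, 1 ≤ i → i ≤ P.L - 1 → P.IsTransportAt x i (Y i)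

lemma AFcaFeasible.exists_isTransportAt {z : ℝ} (h : P.AFcaFeasible x z) {i : ℕ} (hi1 : 1 ≤ i)
    (hi2 : i ≤ P.L - 1) : ∃ y, P.IsTransportAt x i y := by
  have hsum : ∑ p ∈ Icc 1 P.Q, P.inflowC x i p = ∑ q ∈ Icc 1 (P.Q + 1), P.outflowC x i q := by
    rw [sum_inflowC (by omega), sum_outflowC]
    linarith [h.flow_mid i hi1 hi2]
  have hrc : ∀ k ∈ Icc 1 P.Q,
      P.inflowC x i k + P.outflowC x i k ≤ ∑ q ∈ Icc 1 (P.Q + 1), P.outflowC x i q := by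
    intro k hk
    rw [sum_outflowC, ← outflowC_add_outflowNotC i k]
    linarith [h.color_alt i hi1 hi2 k hk]
  obtain ⟨y, hy0, hyd, hyr, hyc⟩ := exists_transport_diag_eq_zero
    (Icc_subset_Icc_right (Nat.le_succ _)) (fun p _ => inflowC_nonneg h.nonneg i p)
    (fun q _ => outflowC_nonneg h.nonneg i q) hsum hrc
  exact ⟨y, hy0, hyd, hyr, hyc⟩

variable (x) (Y : ℕ → ℕ → ℕ → ℝ)

variable (P) in
/-- Away from the source, the flow of colour `c` leaving vertex `i` is split among the layers `p`
in proportion to `Y i p c`. -/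
noncomputable def share (i p c : ℕ) : ℝ := if i = 0 then 1 else Y i p c / P.outflowC x i c

variable (P) in
noncomputable def liftFlow (b : (ℕ × ℕ) × ℕ × ℕ) : ℝ :=
  x (P.mlProj b) * P.share x Y b.1.1 b.1.2 (P.mlProj b).2.2

variable {x Y}

lemma liftFlow_liftArc {p : ℕ} {a : ℕ × ℕ × ℕ} (hp : p ≠ a.2.2) :
    P.liftFlow x Y (P.liftArc p a) = x a * P.share x Y a.1 p a.2.2 := by
  rw [liftFlow, P.mlProj_liftArc hp]
  rfl

lemma IsTransportAt.outflowC_mul_share {j : ℕ} (hY : P.IsTransportAt x j (Y j)) (hj : j ≠ 0)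
    {p c : ℕ} (hp : p ∈ Icc 1 P.Q) (hc : c ∈ Icc 1 (P.Q + 1)) :
    P.outflowC x j c * P.share x Y j p c = Y j p c := by
  rw [share, if_neg hj]
  by_cases h0 : P.outflowC x j c = 0
  · have hle := single_le_sum (fun p _ => hY.nonneg p c) hp
    rw [hY.col c hc, h0] at hle
    simp [h0, le_antisymm hle (hY.nonneg p c)]
  · exact mul_div_cancel₀ _ h0

lemma IsTransportAt.mlOut_liftFlow {j q : ℕ} (hY : P.IsTransportAt x j (Y j)) (hj : j ≠ 0)
    (hq : q ∈ Icc 1 P.Q) : P.mlOut (P.liftFlow x Y) (j, q) = P.inflowC x j q := by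
  have hlift : ∀ a ∈ P.arcs.filter (fun a => a.1 = j ∧ a.2.2 ≠ q),
      P.liftFlow x Y (P.liftArc q a) = x a * P.share x Y j q a.2.2 := by
    intro a ha
    obtain ⟨-, rfl, hne⟩ := mem_filter.1 ha
    exact liftFlow_liftArc (Ne.symm hne)
  have hdiag : ∀ a ∈ P.arcs.filter (fun a => a.1 = j),
      x a * P.share x Y j q a.2.2 ≠ 0 → a.2.2 ≠ q := by
    rintro a - h rfl
    simp [share, hY.diag, hj] at h
  rw [mlOut, P.sum_filter_mlArcs_fst _ hj hq, sum_congr rfl hlift, ← filter_filter,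
    sum_filter_of_ne hdiag, sum_outflowC_mul, ← hY.row q hq]
  exact sum_congr rfl fun c hc => hY.outflowC_mul_share hj hq hc

namespace IsColorTransport

variable (hY : P.IsColorTransport x Y) (hx : ∀ a ∈ P.arcs, 0 ≤ x a)
include hY hx

lemma share_nonneg {i : ℕ} (hi : i ≤ P.L - 1) (p c : ℕ) : 0 ≤ P.share x Y i p c := by
  unfold share
  split_ifs with hi0
  · exact zero_le_one
  · exact div_nonneg ((hY i (by omega) hi).nonneg p c) (outflowC_nonneg hx i c)

lemma sum_liftFlow_liftArc {a : ℕ × ℕ × ℕ} (ha : a ∈ P.arcs) :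
    ∑ p ∈ (P.layers a.1).erase a.2.2, P.liftFlow x Y (P.liftArc p a) = x a := by
  rw [sum_congr rfl fun p hp => liftFlow_liftArc (ne_of_mem_erase hp), ← mul_sum]
  obtain ⟨hij, hjL, hc⟩ := P.bounds_of_mem_arcs ha
  by_cases hi : a.1 = 0
  · have hc0 : a.2.2 ≠ 0 := by have := (mem_Icc.1 hc).1; omega
    simp [layers, share, hi, erase_eq_of_notMem (notMem_singleton.2 hc0)]
  · have hYa := hY a.1 (by omega) (by omega)
    have hsum : ∑ p ∈ (P.layers a.1).erase a.2.2, P.share x Y a.1 p a.2.2 =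
        P.outflowC x a.1 a.2.2 / P.outflowC x a.1 a.2.2 := by
      simp only [layers, share, if_neg hi]
      rw [← sum_div, sum_erase _ (f := fun p => Y a.1 p a.2.2) (hYa.diag _), hYa.col _ hc]
    rw [hsum]
    by_cases h0 : P.outflowC x a.1 a.2.2 = 0
    · have hle := le_outflowC hx ha
      rw [h0] at hle ⊢
      simp [le_antisymm hle (hx a ha)]
    · rw [div_self h0, mul_one]

lemma sum_liftFlow_filter (pr : (ℕ × ℕ) × ℕ × ℕ → Prop) [DecidablePred pr]
    (pr' : ℕ × ℕ × ℕ → Prop) [DecidablePred pr']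
    (h : ∀ a ∈ P.arcs, ∀ p ∈ (P.layers a.1).erase a.2.2, pr (P.liftArc p a) ↔ pr' a) :
    ∑ b ∈ P.mlArcs.filter pr, P.liftFlow x Y b = ∑ a ∈ P.arcs.filter pr', x a := by
  rw [sum_filter_mlArcs _ _ _ _ h]
  exact sum_congr rfl fun a ha => hY.sum_liftFlow_liftArc hx (mem_filter.1 ha).1

end IsColorTransport

lemma AFcaFeasible.afmlFeasible_liftFlow {z : ℝ} (h : P.AFcaFeasible x z)
    (hY : P.IsColorTransport x Y) : P.AFmlFeasible (P.liftFlow x Y) z where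
  nonneg b hb := by
    have := P.bounds_of_mem_arcs (P.mlProj_mem hb)
    exact mul_nonneg (h.nonneg _ (P.mlProj_mem hb)) (hY.share_nonneg h.nonneg (by
      simp only [mlProj] at this; omega) _ _)
  znonneg := h.znonneg
  flow_source := by
    rw [mlOut, hY.sum_liftFlow_filter h.nonneg _ (fun a => a.1 = 0)]
    · have := h.flow_source
      rw [inflow_zero, outflow] at this
      linarith
    · intro a _ p hp
      simp only [liftArc, Prod.mk.injEq, and_iff_left_iff_imp]
      intro h0
      simpa [layers, h0] using (mem_erase.1 hp).2
  flow_mid j q hj1 hj2 hq := by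
    rw [mlIn, hY.sum_liftFlow_filter h.nonneg _ (fun a => a.2.1 = j ∧ a.2.2 = q),
      (hY j hj1 hj2).mlOut_liftFlow (by omega) hq]
    · rfl
    · rintro ⟨i, k, c⟩ ha p _
      have hqQ := (mem_Icc.1 hq).2
      simp only [liftArc, Prod.mk.injEq]
      split_ifs with hc
      · obtain ⟨-, rfl, -⟩ := (P.mem_arcs_mk.1 ha).resolve_left (by simp [hc])
        exact iff_of_false (by omega) (by omega)
      · rfl
  flow_sink := by
    rw [hY.sum_liftFlow_filter h.nonneg _ (fun a => a.2.1 = P.L) fun _ _ _ _ => Iff.rfl]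
    have := h.flow_sink
    rw [outflow_L, inflow] at this
    linarith
  demand u := by
    rw [hY.sum_liftFlow_filter h.nonneg _ (fun a => a.2.1 = a.1 + P.len u ∧ a.2.2 = P.col u)]
    · exact h.demand u
    · intro a ha p hp
      have := (mem_Icc.1 (P.hcol u)).2
      have hpc := ne_of_mem_erase hp
      simp only [liftArc]
      split_ifs with hc
      · exact iff_of_false (fun h => h.2.2 h.2.1) (by omega)
      · constructor
        · exact fun h => ⟨h.1, h.2.1⟩
        · exact fun h => ⟨h.1, h.2, fun h' => hpc (h'.trans h.2.symm)⟩

end Flow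

end CBPP

/-- From any nonnegative real AF_ca-feasible solution `(x̄, z̄)` one obtains a nonnegative
real AF_ml-feasible solution `(x̄′, z̄)` with the same objective value `z̄`. -/
theorem stmt_12 (P : CBPP) (x : ℕ × ℕ × ℕ → ℝ) (z : ℝ) (hfeas : P.AFcaFeasible x z) :
    ∃ x' : (ℕ × ℕ) × ℕ × ℕ → ℝ, P.AFmlFeasible x' z := by
  choose! Y hY using fun i (hi1 : 1 ≤ i) (hi2 : i ≤ P.L - 1) => hfeas.exists_isTransportAt hi1 hi2
  exact ⟨P.liftFlow x Y, hfeas.afmlFeasible_liftFlow hY⟩
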